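/- Suppose both globalized partial actions are Galois: there exist n and x_i, y_i ∈ S with Σ_i x_i·β_g(y_i)·1_S = δ_{g,1}·1_S for all g ∈ G, and similarly for S'. If F : T → T' is a ring isomorphism satisfying F ∘ β_g = β'_g ∘ F for all g ∈ G and F(1_S) = 1_{S'}, then for every normal subgroup H of G (with a common fixed enumeration) the map φ : S^{α_H} → (S')^{α'_H} defined by φ(s) := F(ψ_H(s))·1_{S'} is an additive, multiplicative bijection with φ(1_S) = 1_{S'}, F(e_H) = e'_H, φ(D̃_{gH}) = D̃'_{gH}, φ(α̃_{gH}(x)) = α̃'_{gH}(φ(x)) for every x ∈ D̃_{g⁻¹H}, and φ(a·s) = F(a)·φ(s) for every a ∈ T^{β_G} and s ∈ S^{α_H}; i.e. the induced partial actions of G/H on S^{α_H} and (S')^{α'_H} are partially G/H-isomorphic. (Theorem 4.3, (i) ⇒ (ii).) -/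

import Mathlib

/-!
On `S` the map `ψ_H` is the identity modulo `1_S`: `e_1 = 1_S` and every other `e_i` contains the
factor `1 - β_{h_1}(1_S) = 1 - 1_S`. Hence `φ s = F (ψ_H s · 1_S) = F s` for `s ∈ S`, so `φ` is just
the restriction of `F`. Since `F` commutes with the actions and sends `1_S` to `1_{S'}`, it carries
`e_H`, `ψ_H`, the invariance conditions defining `S^{α_H}`, the idempotents `1̃_{gH}` and the maps
`α̃_{gH}` to their primed counterparts, and its inverse does the same in the other direction.
-/

open Finset

section InducedAction

variable {T T' G : Type*} [CommRing T] [CommRing T'] [Monoid G]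

/-- The idempotent `e_{i+1}` of the paper, whose enumeration `h_1, …, h_m` starts at `1`. -/
def disjointedIdem (β : G →* RingAut T) (h : ℕ → G) (p : T) (i : ℕ) : T :=
  (∏ j ∈ range i, (1 - β (h j) p)) * β (h i) p

def psiH (β : G →* RingAut T) (h : ℕ → G) (m : ℕ) (p t : T) : T :=
  ∑ i ∈ range m, β (h i) t * disjointedIdem β h p i

/-- Membership in `S^{α_H}` for `S = T·p`. -/
def IsHInvariant (β : G →* RingAut T) (h : ℕ → G) (m : ℕ) (p s : T) : Prop :=
  s * p = s ∧ ∀ i < m, β (h i) s * p = s * (β (h i) p * p)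

variable {β : G →* RingAut T} {β' : G →* RingAut T'} {h : ℕ → G} {m : ℕ} {p : T}

lemma disjointedIdem_mul_of_ne_zero (hp : p * p = p) (h1 : h 0 = 1) {i : ℕ} (hi : i ≠ 0) :
    disjointedIdem β h p i * p = 0 := by
  obtain ⟨k, rfl⟩ := Nat.exists_eq_succ_of_ne_zero hi
  have hkill : (1 - β (h 0) p) * p = 0 := by
    rw [h1, map_one, RingAut.one_apply, sub_mul, one_mul, hp, sub_self]
  rw [disjointedIdem, prod_range_succ']
  linear_combination
    (∏ j ∈ range k, (1 - β (h (j + 1)) p)) * β (h (k + 1)) p * hkill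

lemma psiH_mul_self (hp : p * p = p) (h1 : h 0 = 1) (hm : 0 < m) (t : T) :
    psiH β h m p t * p = t * p := by
  rw [psiH, sum_mul, sum_eq_single_of_mem 0 (mem_range.mpr hm)]
  · rw [disjointedIdem, h1, map_one, RingAut.one_apply, RingAut.one_apply, prod_range_zero,
      one_mul, mul_assoc, hp]
  · intro i _ hi
    rw [mul_assoc, disjointedIdem_mul_of_ne_zero hp h1 hi, mul_zero]

section Equivariant

variable {R : Type*} [EquivLike R T T'] [RingEquivClass R T T'] (F : R)
  (hF : ∀ g t, F (β g t) = β' g (F t))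
include hF

lemma map_disjointedIdem (i : ℕ) :
    F (disjointedIdem β h p i) = disjointedIdem β' h (F p) i := by
  simp only [disjointedIdem, map_mul, map_prod, map_sub, map_one, hF]

lemma map_psiH (t : T) : F (psiH β h m p t) = psiH β' h m (F p) (F t) := by
  simp only [psiH, map_sum, map_mul, hF, map_disjointedIdem F hF]

lemma IsHInvariant.map {s : T} (hs : IsHInvariant β h m p s) :
    IsHInvariant β' h m (F p) (F s) := by
  refine ⟨by rw [← map_mul, hs.1], fun i hi => ?_⟩
  rw [← hF, ← map_mul, hs.2 i hi, map_mul, map_mul, hF]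

end Equivariant

lemma RingEquiv.symm_apply_comm (F : T ≃+* T') (hF : ∀ g t, F (β g t) = β' g (F t))
    (g : G) (t' : T') : F.symm (β' g t') = β g (F.symm t') :=
  F.injective (by rw [hF, F.apply_symm_apply, F.apply_symm_apply])

lemma isHInvariant_map_iff (F : T ≃+* T') (hF : ∀ g t, F (β g t) = β' g (F t)) (s : T) :
    IsHInvariant β' h m (F p) (F s) ↔ IsHInvariant β h m p s := by
  refine ⟨fun hs => ?_, IsHInvariant.map F hF⟩
  simpa using hs.map F.symm (F.symm_apply_comm hF)

end InducedAction

lemma RingEquiv.image_setOf_mul {R R' : Type*} [CommRing R] [CommRing R'] (F : R ≃+* R')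
    {P : R → Prop} {Q : R' → Prop} (hPQ : ∀ s, Q (F s) ↔ P s) (c : R) :
    F '' {x | ∃ s, P s ∧ x = s * c} = {x | ∃ s, Q s ∧ x = s * F c} := by
  ext x'
  constructor
  · rintro ⟨_, ⟨s, hs, rfl⟩, rfl⟩
    exact ⟨F s, (hPQ s).2 hs, map_mul F s c⟩
  · rintro ⟨s', hs', rfl⟩
    refine ⟨F.symm s' * c, ⟨F.symm s', (hPQ _).1 (by simpa using hs'), rfl⟩, ?_⟩
    rw [map_mul, F.apply_symm_apply]

theorem stmt_14_general {T T' : Type*} [CommRing T] [CommRing T'] {G : Type*} [Group G]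
    (β : G →* RingAut T) (β' : G →* RingAut T')
    (oneS : T) (oneS' : T')
    (hidem : oneS * oneS = oneS)
    -- H a normal subgroup of G with a common fixed enumeration
    (m : ℕ) (hm : 0 < m) (h : ℕ → G) (h1 : h 0 = 1)
    -- the maps ψ_H, e_H on both sides
    (e : ℕ → T)
    (he : ∀ i, e i = (∏ j ∈ Finset.range i, (1 - β (h j) oneS)) * β (h i) oneS)
    (ψ : T → T) (hψ : ∀ t, ψ t = ∑ i ∈ Finset.range m, β (h i) t * e i)
    (eH : T) (heH : eH = ψ oneS)
    (e' : ℕ → T')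
    (he' : ∀ i, e' i = (∏ j ∈ Finset.range i, (1 - β' (h j) oneS')) * β' (h i) oneS')
    (ψ' : T' → T') (hψ' : ∀ t, ψ' t = ∑ i ∈ Finset.range m, β' (h i) t * e' i)
    (eH' : T') (heH' : eH' = ψ' oneS')
    -- the induced partial actions of G/H on both sides
    (SaH : T → Prop)
    (hSaH : ∀ s : T, SaH s ↔
      (s * oneS = s ∧ ∀ i < m, β (h i) s * oneS = s * (β (h i) oneS * oneS)))
    (oneTil : G → T) (honeTil : ∀ g : G, oneTil g = β g eH * oneS)
    (Dtil : G → Set T) (hDtil : ∀ g : G, Dtil g = {x : T | ∃ s : T, SaH s ∧ x = s * oneTil g})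
    (αTil : G → T → T) (hαTil : ∀ (g : G) (x : T), αTil g x = β g (ψ x) * oneS)
    (SaH' : T' → Prop)
    (hSaH' : ∀ s : T', SaH' s ↔
      (s * oneS' = s ∧ ∀ i < m, β' (h i) s * oneS' = s * (β' (h i) oneS' * oneS')))
    (oneTil' : G → T') (honeTil' : ∀ g : G, oneTil' g = β' g eH' * oneS')
    (Dtil' : G → Set T')
    (hDtil' : ∀ g : G, Dtil' g = {x : T' | ∃ s : T', SaH' s ∧ x = s * oneTil' g})
    (αTil' : G → T' → T') (hαTil' : ∀ (g : G) (x : T'), αTil' g x = β' g (ψ' x) * oneS')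
    (x : ℕ → T)
    -- F : T → T' is a G-isomorphism with F(1_S) = 1_{S'}
    (F : T ≃+* T')
    (hF : ∀ (g : G) (t : T), F (β g t) = β' g (F t))
    (hF1 : F oneS = oneS')
    -- the map φ
    (φ : T → T') (hφ : ∀ s : T, φ s = F (ψ s) * oneS') :
    F eH = eH' ∧
    (∀ s : T, SaH s → SaH' (φ s)) ∧
    Set.BijOn φ {s : T | SaH s} {s : T' | SaH' s} ∧
    (∀ s t : T, SaH s → SaH t →
      φ (s + t) = φ s + φ t ∧ φ (s * t) = φ s * φ t) ∧
    φ oneS = oneS' ∧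
    (∀ g : G, φ '' Dtil g = Dtil' g) ∧
    (∀ g : G, ∀ x ∈ Dtil g⁻¹, φ (αTil g x) = αTil' g (φ x)) ∧
    (∀ a s : T, (∀ g : G, β g a = a) → SaH s → φ (a * s) = F a * φ s) := by
  subst hF1
  obtain rfl : ψ = psiH β h m oneS := funext fun t => by simp only [hψ, he, psiH, disjointedIdem]
  obtain rfl : ψ' = psiH β' h m (F oneS) :=
    funext fun t => by simp only [hψ', he', psiH, disjointedIdem]
  obtain rfl : SaH = IsHInvariant β h m oneS := funext fun s => propext (hSaH s)
  obtain rfl : SaH' = IsHInvariant β' h m (F oneS) := funext fun s => propext (hSaH' s)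
  have hFψ (t : T) : F (psiH β h m oneS t) = psiH β' h m (F oneS) (F t) := map_psiH F hF t
  have hFeH : F eH = eH' := by rw [heH, heH', hFψ]
  have hφF {t : T} (ht : t * oneS = t) : φ t = F t := by
    rw [hφ, ← map_mul, psiH_mul_self hidem h1 hm, ht]
  have hinv := isHInvariant_map_iff F hF (h := h) (m := m) (p := oneS)
  have hDtil_mul (g : G) : ∀ x ∈ Dtil g, x * oneS = x := by
    rw [hDtil]
    rintro _ ⟨s, -, rfl⟩
    rw [honeTil, mul_assoc, mul_assoc, hidem]
  refine ⟨hFeH, fun s hs => hφF hs.1 ▸ (hinv s).2 hs,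
    (F.toEquiv.bijOn hinv).congr fun s hs => (hφF hs.1).symm,
    fun s t hs ht => ⟨?_, ?_⟩, hφF hidem, fun g => ?_, fun g x hx => ?_,
    fun a s _ hs => ?_⟩
  · rw [hφF hs.1, hφF ht.1, hφF (by rw [add_mul, hs.1, ht.1]), map_add]
  · rw [hφF hs.1, hφF ht.1, hφF (by rw [mul_assoc, ht.1]), map_mul]
  · rw [Set.image_congr fun x hx => hφF (hDtil_mul g x hx), hDtil, hDtil',
      F.image_setOf_mul hinv, honeTil, honeTil', map_mul, hF, hFeH]
  · rw [hφF (by rw [hαTil, mul_assoc, hidem]), hφF (hDtil_mul _ x hx), hαTil, hαTil',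
      map_mul, hF, hFψ]
  · rw [hφF hs.1, hφF (by rw [mul_assoc, hs.1]), map_mul]

/-- Theorem 4.3, (i) ⇒ (ii): a G-isomorphism of the globalizations sending 1_S to 1_{S'}
induces, for every normal subgroup H, a partial G/H-isomorphism between the induced
partial actions on the invariant subrings S^{α_H} and (S')^{α'_H}. -/
theorem stmt_14 {T T' : Type*} [CommRing T] [CommRing T'] {G : Type*} [Group G] [Fintype G]
    (β : G →* RingAut T) (β' : G →* RingAut T')
    (oneS : T) (oneS' : T')
    (hidem : oneS * oneS = oneS) (hidem' : oneS' * oneS' = oneS')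
    (hglob : ∏ g : G, (1 - β g oneS) = 0)
    (hglob' : ∏ g : G, (1 - β' g oneS') = 0)
    -- H a normal subgroup of G with a common fixed enumeration
    (m : ℕ) (hm : 0 < m) (h : ℕ → G) (h1 : h 0 = 1)
    (hinj : ∀ i < m, ∀ j < m, h i = h j → i = j)
    (hmulc : ∀ i < m, ∀ j < m, ∃ k < m, h i * h j = h k)
    (hnormal : ∀ g : G, ∀ i < m, ∃ j < m, g * h i * g⁻¹ = h j)
    -- the maps ψ_H, e_H on both sides
    (e : ℕ → T)
    (he : ∀ i, e i = (∏ j ∈ Finset.range i, (1 - β (h j) oneS)) * β (h i) oneS)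
    (ψ : T → T) (hψ : ∀ t, ψ t = ∑ i ∈ Finset.range m, β (h i) t * e i)
    (eH : T) (heH : eH = ψ oneS)
    (e' : ℕ → T')
    (he' : ∀ i, e' i = (∏ j ∈ Finset.range i, (1 - β' (h j) oneS')) * β' (h i) oneS')
    (ψ' : T' → T') (hψ' : ∀ t, ψ' t = ∑ i ∈ Finset.range m, β' (h i) t * e' i)
    (eH' : T') (heH' : eH' = ψ' oneS')
    -- the induced partial actions of G/H on both sides
    (SaH : T → Prop)
    (hSaH : ∀ s : T, SaH s ↔
      (s * oneS = s ∧ ∀ i < m, β (h i) s * oneS = s * (β (h i) oneS * oneS)))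
    (oneTil : G → T) (honeTil : ∀ g : G, oneTil g = β g eH * oneS)
    (Dtil : G → Set T) (hDtil : ∀ g : G, Dtil g = {x : T | ∃ s : T, SaH s ∧ x = s * oneTil g})
    (αTil : G → T → T) (hαTil : ∀ (g : G) (x : T), αTil g x = β g (ψ x) * oneS)
    (SaH' : T' → Prop)
    (hSaH' : ∀ s : T', SaH' s ↔
      (s * oneS' = s ∧ ∀ i < m, β' (h i) s * oneS' = s * (β' (h i) oneS' * oneS')))
    (oneTil' : G → T') (honeTil' : ∀ g : G, oneTil' g = β' g eH' * oneS')
    (Dtil' : G → Set T')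
    (hDtil' : ∀ g : G, Dtil' g = {x : T' | ∃ s : T', SaH' s ∧ x = s * oneTil' g})
    (αTil' : G → T' → T') (hαTil' : ∀ (g : G) (x : T'), αTil' g x = β' g (ψ' x) * oneS')
    -- both globalized actions are Galois
    (n : ℕ) (x y : ℕ → T)
    (hxS : ∀ i < n, x i * oneS = x i) (hyS : ∀ i < n, y i * oneS = y i)
    (hGal : ∀ g : G,
      (g = 1 → ∑ i ∈ Finset.range n, x i * β g (y i) * oneS = oneS) ∧
      (g ≠ 1 → ∑ i ∈ Finset.range n, x i * β g (y i) * oneS = 0))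
    (n' : ℕ) (x' y' : ℕ → T')
    (hxS' : ∀ i < n', x' i * oneS' = x' i) (hyS' : ∀ i < n', y' i * oneS' = y' i)
    (hGal' : ∀ g : G,
      (g = 1 → ∑ i ∈ Finset.range n', x' i * β' g (y' i) * oneS' = oneS') ∧
      (g ≠ 1 → ∑ i ∈ Finset.range n', x' i * β' g (y' i) * oneS' = 0))
    -- F : T → T' is a G-isomorphism with F(1_S) = 1_{S'}
    (F : T ≃+* T')
    (hF : ∀ (g : G) (t : T), F (β g t) = β' g (F t))
    (hF1 : F oneS = oneS')
    -- the map φ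
    (φ : T → T') (hφ : ∀ s : T, φ s = F (ψ s) * oneS') :
    F eH = eH' ∧
    (∀ s : T, SaH s → SaH' (φ s)) ∧
    Set.BijOn φ {s : T | SaH s} {s : T' | SaH' s} ∧
    (∀ s t : T, SaH s → SaH t →
      φ (s + t) = φ s + φ t ∧ φ (s * t) = φ s * φ t) ∧
    φ oneS = oneS' ∧
    (∀ g : G, φ '' Dtil g = Dtil' g) ∧
    (∀ g : G, ∀ x ∈ Dtil g⁻¹, φ (αTil g x) = αTil' g (φ x)) ∧
    (∀ a s : T, (∀ g : G, β g a = a) → SaH s → φ (a * s) = F a * φ s) :=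
  stmt_14_general β β' oneS oneS' hidem m hm h h1 e he ψ hψ eH heH e' he' ψ' hψ' eH' heH' SaH hSaH
    oneTil honeTil Dtil hDtil αTil hαTil SaH' hSaH' oneTil' honeTil' Dtil' hDtil' αTil' hαTil' x F
    hF hF1 φ hφ
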